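/- arXiv:1805.01425 — 2 statements merged into one kernel-verified Lean document; each statement's English description precedes it below -/
import Mathlib

section
/- Let Λ, α, ω, φ, ρ ≥ 0 and μ > 0, and set ξ₁ = α + μ + d (with d ≥ 0), ξ₂ = ω + μ, ξ₃ = ρ + φ + μ. Suppose S, I, C, A : [0,∞) → ℝ are differentiable and satisfy, for all t ≥ 0, the pathwise drift equations (S + I)'(t) = Λ − μ S(t) − ξ₃ I(t) + α A(t) + ω C(t), C'(t) = φ I(t) − ξ₂ C(t), and A'(t) = ρ I(t) − ξ₁ A(t). Then for every t > 0, (1/t)∫₀ᵗ S(s) ds = Λ/μ + (1/μ)(αρ/ξ₁ − ξ₃ + ωφ/ξ₂)·(1/t)∫₀ᵗ I(s) ds − K(t)/μ, where K(t) = [ (S(t)−S(0)) + (I(t)−I(0)) + (α/ξ₁)(A(t)−A(0)) + (ω/ξ₂)(C(t)−C(0)) ] / t. -/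
/-! Eliminating the two linear compartments: since `A' = ρ I − ξ₁ A` and `C' = φ I − ξ₂ C`,
the combination `G = S + I + (α/ξ₁) A + (ω/ξ₂) C` has derivative `Λ − μ S + c I` with
`c = αρ/ξ₁ − ξ₃ + ωφ/ξ₂`, in which `A` and `C` no longer occur. Integrating over `[0, t]`
and dividing by `μ t` gives the identity, with `K(t) = (G t − G 0)/t`. -/

open MeasureTheory Set

lemma HasDerivAt.const_div_mul_of_linear {Y : ℝ → ℝ} {a b c u t : ℝ} (hb : b ≠ 0)
    (hY : HasDerivAt Y (a * u - b * Y t) t) :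
    HasDerivAt (fun s => c / b * Y s) (c * a / b * u - c * Y t) t :=
  (hY.const_mul (c / b)).congr_deriv (by field_simp)

lemma average_eq_of_hasDerivAt {G S I : ℝ → ℝ} {Λ μ c t : ℝ} (hμ : μ ≠ 0) (ht : t ≠ 0)
    (hG : ∀ x ∈ uIcc 0 t, HasDerivAt G (Λ - μ * S x + c * I x) x)
    (hS : IntervalIntegrable S volume 0 t) (hI : IntervalIntegrable I volume 0 t) :
    (1 / t) * ∫ s in (0:ℝ)..t, S s =
      Λ / μ + (1 / μ) * c * ((1 / t) * ∫ s in (0:ℝ)..t, I s) - ((G t - G 0) / t) / μ := by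
  have hlin : IntervalIntegrable (fun x => Λ - μ * S x) volume 0 t :=
    intervalIntegrable_const.sub (hS.const_mul μ)
  have hftc : G t - G 0 = Λ * t - μ * (∫ s in (0:ℝ)..t, S s) + c * ∫ s in (0:ℝ)..t, I s := by
    rw [← intervalIntegral.integral_eq_sub_of_hasDerivAt hG (hlin.add (hI.const_mul c)),
      intervalIntegral.integral_add hlin (hI.const_mul c),
      intervalIntegral.integral_sub intervalIntegrable_const (hS.const_mul μ),
      intervalIntegral.integral_const_mul, intervalIntegral.integral_const_mul,
      intervalIntegral.integral_const, smul_eq_mul]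
    ring
  rw [hftc]
  field_simp
  ring

lemma hasDerivAt_sica_combination {S I C A : ℝ → ℝ} {Λ μ d α ω φ ρ x : ℝ}
    (hξ₁ : α + μ + d ≠ 0) (hξ₂ : ω + μ ≠ 0)
    (hSI : HasDerivAt (fun s => S s + I s)
      (Λ - μ * S x - (ρ + φ + μ) * I x + α * A x + ω * C x) x)
    (hC : HasDerivAt C (φ * I x - (ω + μ) * C x) x)
    (hA : HasDerivAt A (ρ * I x - (α + μ + d) * A x) x) :
    HasDerivAt (fun s => S s + I s + α / (α + μ + d) * A s + ω / (ω + μ) * C s)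
      (Λ - μ * S x + (α * ρ / (α + μ + d) - (ρ + φ + μ) + ω * φ / (ω + μ)) * I x) x :=
  ((hSI.add (hA.const_div_mul_of_linear hξ₁)).add (hC.const_div_mul_of_linear hξ₂)).congr_deriv
    (by ring)

theorem stmt_10_general (Λ μ d α ω φ ρ : ℝ)
    (hμ : 0 < μ) (hd : 0 ≤ d) (hα : 0 ≤ α) (hω : 0 ≤ ω)
    (S I C A : ℝ → ℝ)
    (hI : ∀ t ≥ (0:ℝ), DifferentiableAt ℝ I t)
    (hSI : ∀ t ≥ (0:ℝ), HasDerivAt (fun s => S s + I s)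
      (Λ - μ * S t - (ρ + φ + μ) * I t + α * A t + ω * C t) t)
    (hC : ∀ t ≥ (0:ℝ), HasDerivAt C (φ * I t - (ω + μ) * C t) t)
    (hA : ∀ t ≥ (0:ℝ), HasDerivAt A (ρ * I t - (α + μ + d) * A t) t) :
    ∀ t > (0:ℝ),
      (1 / t) * ∫ s in (0:ℝ)..t, S s =
        Λ / μ
        + (1 / μ) * (α * ρ / (α + μ + d) - (ρ + φ + μ) + ω * φ / (ω + μ))
            * ((1 / t) * ∫ s in (0:ℝ)..t, I s)
        - (((S t - S 0) + (I t - I 0) + (α / (α + μ + d)) * (A t - A 0)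
            + (ω / (ω + μ)) * (C t - C 0)) / t) / μ := by
  intro t ht
  have hnonneg : ∀ x ∈ uIcc 0 t, 0 ≤ x := fun x hx => by
    rw [uIcc_of_le ht.le] at hx
    exact hx.1
  have hG := fun x hx => hasDerivAt_sica_combination (by positivity) (by positivity)
    (hSI x (hnonneg x hx)) (hC x (hnonneg x hx)) (hA x (hnonneg x hx))
  have hIcont : ContinuousOn I (uIcc 0 t) := fun x hx =>
    (hI x (hnonneg x hx)).continuousAt.continuousWithinAt
  have hScont : ContinuousOn S (uIcc 0 t) := fun x hx =>
    (((hSI x (hnonneg x hx)).differentiableAt.sub (hI x (hnonneg x hx))).continuousAt.congr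
      (.of_forall fun s => add_sub_cancel_right (S s) (I s))).continuousWithinAt
  convert average_eq_of_hasDerivAt hμ.ne' ht.ne' hG hScont.intervalIntegrable
    hIcont.intervalIntegrable using 4
  ring

/-- Time-average identity (key identity (p1) in the persistence proof):
for every `t > 0`,
`(1/t)∫₀ᵗ S = Λ/μ + (1/μ)(αρ/ξ₁ − ξ₃ + ωφ/ξ₂)(1/t)∫₀ᵗ I − K(t)/μ`,
where `K(t) = [(S(t)−S(0)) + (I(t)−I(0)) + (α/ξ₁)(A(t)−A(0)) +
(ω/ξ₂)(C(t)−C(0))]/t`. -/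
theorem stmt_10 (Λ μ d α ω φ ρ : ℝ)
    (hΛ : 0 ≤ Λ) (hμ : 0 < μ) (hd : 0 ≤ d) (hα : 0 ≤ α)
    (hω : 0 ≤ ω) (hφ : 0 ≤ φ) (hρ : 0 ≤ ρ)
    (S I C A : ℝ → ℝ)
    (hS : ∀ t ≥ (0:ℝ), DifferentiableAt ℝ S t)
    (hI : ∀ t ≥ (0:ℝ), DifferentiableAt ℝ I t)
    (hCd : ∀ t ≥ (0:ℝ), DifferentiableAt ℝ C t)
    (hAd : ∀ t ≥ (0:ℝ), DifferentiableAt ℝ A t)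
    (hSI : ∀ t ≥ (0:ℝ), HasDerivAt (fun s => S s + I s)
      (Λ - μ * S t - (ρ + φ + μ) * I t + α * A t + ω * C t) t)
    (hC : ∀ t ≥ (0:ℝ), HasDerivAt C (φ * I t - (ω + μ) * C t) t)
    (hA : ∀ t ≥ (0:ℝ), HasDerivAt A (ρ * I t - (α + μ + d) * A t) t) :
    ∀ t > (0:ℝ),
      (1 / t) * ∫ s in (0:ℝ)..t, S s =
        Λ / μ
        + (1 / μ) * (α * ρ / (α + μ + d) - (ρ + φ + μ) + ω * φ / (ω + μ))
            * ((1 / t) * ∫ s in (0:ℝ)..t, I s)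
        - (((S t - S 0) + (I t - I 0) + (α / (α + μ + d)) * (A t - A 0)
            + (ω / (ω + μ)) * (C t - C 0)) / t) / μ :=
  stmt_10_general Λ μ d α ω φ ρ hμ hd hα hω S I C A hI hSI hC hA
end

section
/- Let μ, Λ > 0, η_C, η_A > 0, and ξ₁, ξ₂ ≥ 1 with ξ₁ξ₂ ≥ μ. Let I, C, A be real numbers with 0 < I ≤ Λ/μ and 0 ≤ C ≤ Λ/μ, 0 ≤ A ≤ Λ/μ. Then (μ I + ξ₁ η_A A + ξ₂ η_C C)/(I + η_C C + η_A A) ≤ ξ₁ξ₂ − μ(ξ₁ξ₂ − μ) I / (Λ (1 + η_C + η_A)). -/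
/-- Central pointwise estimate in the persistence-in-mean proof:
`(μI + ξ₁η_A A + ξ₂η_C C)/(I + η_C C + η_A A)
  ≤ ξ₁ξ₂ − μ(ξ₁ξ₂ − μ) I / (Λ(1 + η_C + η_A))`. -/
theorem stmt_11 (μ Λ ηC ηA ξ₁ ξ₂ : ℝ)
    (hμ : 0 < μ) (hΛ : 0 < Λ) (hηC : 0 < ηC) (hηA : 0 < ηA)
    (hξ₁ : 1 ≤ ξ₁) (hξ₂ : 1 ≤ ξ₂) (hξξ : μ ≤ ξ₁ * ξ₂)
    (I C A : ℝ)
    (hI : 0 < I) (hIb : I ≤ Λ / μ)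
    (hC : 0 ≤ C) (hCb : C ≤ Λ / μ)
    (hA : 0 ≤ A) (hAb : A ≤ Λ / μ) :
    (μ * I + ξ₁ * ηA * A + ξ₂ * ηC * C) / (I + ηC * C + ηA * A) ≤
      ξ₁ * ξ₂ - μ * (ξ₁ * ξ₂ - μ) * I / (Λ * (1 + ηC + ηA)) := by
  have hD : 0 < I + ηC * C + ηA * A := by positivity
  have hDb : I + ηC * C + ηA * A ≤ Λ / μ * (1 + ηC + ηA) := by
    have h1 : ηC * C ≤ ηC * (Λ / μ) := by nlinarith
    have h2 : ηA * A ≤ ηA * (Λ / μ) := by nlinarith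
    nlinarith
  have step1 : (μ * I + ξ₁ * ηA * A + ξ₂ * ηC * C) / (I + ηC * C + ηA * A) ≤
      ξ₁ * ξ₂ - (ξ₁ * ξ₂ - μ) * (I / (I + ηC * C + ηA * A)) := by
    rw [div_le_iff₀ hD]
    have expand : (ξ₁ * ξ₂ - (ξ₁ * ξ₂ - μ) * (I / (I + ηC * C + ηA * A))) *
        (I + ηC * C + ηA * A) = ξ₁ * ξ₂ * (I + ηC * C + ηA * A) - (ξ₁ * ξ₂ - μ) * I := by
      field_simp
    rw [expand]
    nlinarith [mul_nonneg (mul_nonneg (mul_nonneg (sub_nonneg.2 hξ₁) (zero_le_one.trans hξ₂)) hηC.le) hC,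
      mul_nonneg (mul_nonneg (mul_nonneg (sub_nonneg.2 hξ₂) (zero_le_one.trans hξ₁)) hηA.le) hA]
  have hden : 0 < Λ / μ * (1 + ηC + ηA) := by positivity
  have step2 : μ * I / (Λ * (1 + ηC + ηA)) ≤ I / (I + ηC * C + ηA * A) := by
    have : I / (Λ / μ * (1 + ηC + ηA)) ≤ I / (I + ηC * C + ηA * A) :=
      div_le_div_of_nonneg_left hI.le hD hDb
    calc μ * I / (Λ * (1 + ηC + ηA)) = I / (Λ / μ * (1 + ηC + ηA)) := by
          field_simp
      _ ≤ _ := this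
  have hnn : 0 ≤ ξ₁ * ξ₂ - μ := sub_nonneg.2 hξξ
  have step3 : (ξ₁ * ξ₂ - μ) * (μ * I / (Λ * (1 + ηC + ηA))) ≤
      (ξ₁ * ξ₂ - μ) * (I / (I + ηC * C + ηA * A)) :=
    mul_le_mul_of_nonneg_left step2 hnn
  have : μ * (ξ₁ * ξ₂ - μ) * I / (Λ * (1 + ηC + ηA)) =
      (ξ₁ * ξ₂ - μ) * (μ * I / (Λ * (1 + ηC + ηA))) := by ring
  linarith [step1, step3, this.ge, this.le]
end
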